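/- (Expander mixing lemma, trace form.) Let (G,W) be a d-regular matrix-weighted graph on n vertices with k×k weight matrices, with adjacency eigenvalues d = μ_1 = … = μ_k ≥ μ_{k+1} ≥ … ≥ μ_{nk}, and set |μ| = max(∑_{i=1}^{k} μ_{k+i}, ∑_{i=1}^{k} |μ_{(n−1)k+i}|). Then for all vertex subsets S and T, | tr(E(S,T)) − k·d·|S|·|T|/n | ≤ |μ| · √( |S|·|T|·(1 − |S|/n)·(1 − |T|/n) ). -/

import Mathlib

open Matrix Finset

noncomputable section

/-- The adjacency matrix of a matrix-weighted graph: the `kn × kn` block matrix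
whose `(u,v)` block is the weight matrix `W u v`. -/
def mwAdj (n k : ℕ) (W : Fin n → Fin n → Matrix (Fin k) (Fin k) ℝ) :
    Matrix (Fin n × Fin k) (Fin n × Fin k) ℝ :=
  fun p q => W p.1 q.1 p.2 q.2

/-- The degree matrix of a matrix-weighted graph: block diagonal, with
`(v,v)` block `D_v = ∑ u, W u v`. -/
def mwDeg (n k : ℕ) (W : Fin n → Fin n → Matrix (Fin k) (Fin k) ℝ) :
    Matrix (Fin n × Fin k) (Fin n × Fin k) ℝ :=
  fun p q => if p.1 = q.1 then (∑ u, W u p.1) p.2 q.2 else 0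

/-- The Laplacian `L = D - A` of a matrix-weighted graph. -/
def mwLap (n k : ℕ) (W : Fin n → Fin n → Matrix (Fin k) (Fin k) ℝ) :
    Matrix (Fin n × Fin k) (Fin n × Fin k) ℝ :=
  mwDeg n k W - mwAdj n k W

/-- The matrix-weighted edge count between vertex subsets `S` and `T`:
`E(S,T) = ∑_{s ∈ S, t ∈ T} W s t`, a `k × k` matrix. -/
def mwEdge (n k : ℕ) (W : Fin n → Fin n → Matrix (Fin k) (Fin k) ℝ)
    (S T : Finset (Fin n)) : Matrix (Fin k) (Fin k) ℝ :=
  ∑ s ∈ S, ∑ t ∈ T, W s t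

/-!
Let `Y, Z` be the centred indicator vectors of `S, T` tensored with `I_k`. Then
`tr (Yᵀ A Z) = tr E(S,T) - k d |S| |T| / n`, and `Y, Z` are orthogonal to the block `F = 𝟙 ⊗ I_k`,
whose `k` columns are eigenvectors of `A` for the eigenvalue `d`.

For `P ⊥ F` with `Pᵀ P = g I`, the weights `‖(Uᵀ P)_j‖²` lie in `[0, g]` and sum to `k g`, and
`tr (Pᵀ A P) = ∑ μ_j ‖(Uᵀ P)_j‖²`; a bathtub argument (Ky Fan) then gives
`g ∑ μ_{(n-1)k+i} ≤ tr (Pᵀ A P)`, and, applied to `P` and `F` together, `tr (Pᵀ A P) ≤ g ∑ μ_{k+i}`.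
Polarization with `β Y ± α Z` turns this bound on quadratic forms into the bound on `tr (Yᵀ A Z)`.
-/

section Bathtub

theorem sum_mul_le_sum_mul_of_sub_mul_sub_nonpos {ι : Type*} (s : Finset ι) (μ t w : ι → ℝ)
    (τ : ℝ) (hsum : ∑ j ∈ s, t j = ∑ j ∈ s, w j) (h : ∀ j ∈ s, (μ j - τ) * (t j - w j) ≤ 0) :
    ∑ j ∈ s, μ j * t j ≤ ∑ j ∈ s, μ j * w j := by
  have key := Finset.sum_nonpos h
  simp only [mul_sub, sub_mul, Finset.sum_sub_distrib, ← Finset.mul_sum, hsum] at key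
  linarith

theorem sum_fin_ite_lt {M : Type*} [AddCommMonoid M] {N r : ℕ} (hr : r ≤ N) (f : ℕ → M) :
    ∑ j : Fin N, (if (j : ℕ) < r then f j else 0) = ∑ j ∈ range r, f j := by
  rw [Fin.sum_univ_eq_sum_range (fun j => if j < r then f j else 0), ← Finset.sum_filter]
  congr 1
  ext j
  simp only [Finset.mem_filter, Finset.mem_range]
  omega

theorem sum_fin_ite_sub_le {M : Type*} [AddCommMonoid M] {N r : ℕ} (hr : r ≤ N) (f : ℕ → M) :
    ∑ j : Fin N, (if N - r ≤ (j : ℕ) then f j else 0) = ∑ i ∈ range r, f (N - r + i) := by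
  have hIco : (range N).filter (N - r ≤ ·) = Ico (N - r) N := by
    ext j
    simp only [Finset.mem_filter, Finset.mem_range, Finset.mem_Ico]
    omega
  rw [Fin.sum_univ_eq_sum_range (fun j => if N - r ≤ j then f j else 0), ← Finset.sum_filter,
    hIco, Finset.sum_Ico_eq_sum_range, Nat.sub_sub_self hr]

variable {N r : ℕ} {μ : ℕ → ℝ} {g : ℝ} {t : Fin N → ℝ}

theorem sum_mul_le_mul_sum_range_of_antitoneOn (hμ : AntitoneOn μ (Set.Iio N)) (hr : r ≤ N)
    (ht0 : ∀ j, 0 ≤ t j) (htg : ∀ j, t j ≤ g) (hsum : ∑ j, t j = r * g) :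
    ∑ j : Fin N, μ j * t j ≤ g * ∑ j ∈ range r, μ j := by
  calc ∑ j : Fin N, μ j * t j ≤ ∑ j : Fin N, μ j * (if (j : ℕ) < r then g else 0) := by
        refine sum_mul_le_sum_mul_of_sub_mul_sub_nonpos _ _ _ _ (μ (r - 1)) ?_ fun j _ => ?_
        · rw [hsum, sum_fin_ite_lt hr (fun _ => g)]
          simp
        · have hrN : r - 1 < N := by have := j.2; omega
          split_ifs with hj
          · exact mul_nonpos_of_nonneg_of_nonpos
              (sub_nonneg.2 (hμ (Set.mem_Iio.2 j.2) (Set.mem_Iio.2 hrN) (by omega)))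
              (by linarith [htg j])
          · exact mul_nonpos_of_nonpos_of_nonneg
              (sub_nonpos.2 (hμ (Set.mem_Iio.2 hrN) (Set.mem_Iio.2 j.2) (by omega)))
              (by linarith [ht0 j])
    _ = g * ∑ j ∈ range r, μ j := by
        simp only [mul_ite, mul_zero]
        rw [sum_fin_ite_lt hr (fun j => μ j * g), Finset.mul_sum]
        exact Finset.sum_congr rfl fun _ _ => mul_comm _ _

theorem mul_sum_range_le_sum_mul_of_antitoneOn (hμ : AntitoneOn μ (Set.Iio N)) (hr0 : 0 < r)
    (hr : r ≤ N) (ht0 : ∀ j, 0 ≤ t j) (htg : ∀ j, t j ≤ g) (hsum : ∑ j, t j = r * g) :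
    g * ∑ i ∈ range r, μ (N - r + i) ≤ ∑ j : Fin N, μ j * t j := by
  calc g * ∑ i ∈ range r, μ (N - r + i)
      = ∑ j : Fin N, μ j * (if N - r ≤ (j : ℕ) then g else 0) := by
        simp only [mul_ite, mul_zero]
        rw [sum_fin_ite_sub_le hr (fun j => μ j * g), Finset.mul_sum]
        exact Finset.sum_congr rfl fun _ _ => mul_comm _ _
    _ ≤ ∑ j : Fin N, μ j * t j := by
        refine sum_mul_le_sum_mul_of_sub_mul_sub_nonpos _ _ _ _ (μ (N - r)) ?_ fun j _ => ?_
        · rw [hsum, sum_fin_ite_sub_le hr (fun _ => g)]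
          simp
        · have hrN : N - r < N := by omega
          split_ifs with hj
          · exact mul_nonpos_of_nonpos_of_nonneg
              (sub_nonpos.2 (hμ (Set.mem_Iio.2 hrN) (Set.mem_Iio.2 j.2) hj))
              (by linarith [htg j])
          · exact mul_nonpos_of_nonneg_of_nonpos
              (sub_nonneg.2 (hμ (Set.mem_Iio.2 j.2) (Set.mem_Iio.2 hrN) (by omega)))
              (by linarith [ht0 j])

end Bathtub

section Spectral

variable {I ι : Type*} [Fintype I]

theorem nonneg_of_transpose_mul_self_eq_smul [DecidableEq ι] [Nonempty ι] {P : Matrix I ι ℝ}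
    {g : ℝ} (hP : Pᵀ * P = g • 1) : 0 ≤ g := by
  obtain ⟨i⟩ := ‹Nonempty ι›
  have hii : (Pᵀ * P) i i = g := by simp [hP]
  rw [← hii, Matrix.mul_apply]
  exact Finset.sum_nonneg fun j _ => mul_self_nonneg (P j i)

theorem row_dotProduct_self_le_of_transpose_mul_self_eq_smul [Fintype ι] [DecidableEq ι]
    {M : Matrix I ι ℝ} {g : ℝ} (hg : 0 ≤ g) (hM : Mᵀ * M = g • 1) (q : I) : M q ⬝ᵥ M q ≤ g := by
  set P := M * Mᵀ
  have hP : P * P = g • P := by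
    rw [Matrix.mul_assoc, ← Matrix.mul_assoc Mᵀ, hM, Matrix.smul_mul, Matrix.one_mul,
      Matrix.mul_smul]
  have hPapply : ∀ i j, P i j = M i ⬝ᵥ M j := fun _ _ => rfl
  have hsq : (M q ⬝ᵥ M q) ^ 2 ≤ g * (M q ⬝ᵥ M q) :=
    calc (M q ⬝ᵥ M q) ^ 2 = P q q * P q q := by rw [hPapply, sq]
      _ ≤ ∑ j, P q j * P j q :=
        Finset.single_le_sum (f := fun j => P q j * P j q)
          (fun j _ => by rw [hPapply j q, dotProduct_comm]; exact mul_self_nonneg _)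
          (Finset.mem_univ q)
      _ = g * (M q ⬝ᵥ M q) := by
        rw [← Matrix.mul_apply, hP, Matrix.smul_apply, smul_eq_mul, hPapply]
  nlinarith [show 0 ≤ M q ⬝ᵥ M q from Fintype.sum_nonneg fun i => mul_self_nonneg (M q i)]

theorem sum_row_dotProduct_self_of_transpose_mul_self_eq_smul [Fintype ι] [DecidableEq ι]
    {M : Matrix I ι ℝ} {g : ℝ} (hM : Mᵀ * M = g • 1) :
    ∑ q, M q ⬝ᵥ M q = Fintype.card ι * g := by
  have htr : (Mᵀ * M).trace = ∑ q, M q ⬝ᵥ M q := by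
    rw [Matrix.trace_mul_comm]
    rfl
  rw [← htr, hM, Matrix.trace_smul, Matrix.trace_one, smul_eq_mul, mul_comm]

theorem trace_transpose_mul_diagonal_mul [Fintype ι] [DecidableEq I] (M : Matrix I ι ℝ)
    (f : I → ℝ) :
    (Mᵀ * diagonal f * M).trace = ∑ q, f q * (M q ⬝ᵥ M q) := by
  simp only [Matrix.trace, Matrix.diag, Matrix.mul_apply, Matrix.diagonal_apply, mul_ite,
    mul_zero, Finset.sum_ite_eq', Finset.mem_univ, if_true, Matrix.transpose_apply, dotProduct,
    Finset.mul_sum]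
  rw [Finset.sum_comm]
  exact Finset.sum_congr rfl fun q _ => Finset.sum_congr rfl fun i _ => by ring

end Spectral

section KyFan

variable {I ι κ : Type*} [Fintype I] [DecidableEq I] {N : ℕ} (e : I ≃ Fin N) {μ : ℕ → ℝ}
  {U A : Matrix I I ℝ}

theorem trace_conj_eq_sum_fin [Fintype ι] (hA : A = U * diagonal (fun p => μ (e p)) * Uᵀ)
    (V : Matrix I ι ℝ) :
    (Vᵀ * A * V).trace = ∑ j : Fin N, μ j * ((Uᵀ * V) (e.symm j) ⬝ᵥ (Uᵀ * V) (e.symm j)) := by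
  have hconj : Vᵀ * A * V = (Uᵀ * V)ᵀ * diagonal (fun p => μ (e p)) * (Uᵀ * V) := by
    simp only [hA, Matrix.transpose_mul, Matrix.transpose_transpose, Matrix.mul_assoc]
  rw [hconj, trace_transpose_mul_diagonal_mul, ← e.symm.sum_comp]
  simp

variable {V : Matrix I ι ℝ} {g : ℝ}

theorem transpose_mul_self_of_orthogonal [DecidableEq ι] (hU : U * Uᵀ = 1)
    (hV : Vᵀ * V = g • 1) :
    (Uᵀ * V)ᵀ * (Uᵀ * V) = g • 1 := by
  rw [Matrix.transpose_mul, Matrix.transpose_transpose, Matrix.mul_assoc, ← Matrix.mul_assoc U,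
    hU, Matrix.one_mul, hV]

theorem trace_conj_le_mul_sum_range [Fintype ι] [DecidableEq ι] (hμ : AntitoneOn μ (Set.Iio N))
    (hU : U * Uᵀ = 1) (hA : A = U * diagonal (fun p => μ (e p)) * Uᵀ) (hg : 0 ≤ g)
    (hV : Vᵀ * V = g • 1) (hι : Fintype.card ι ≤ N) :
    (Vᵀ * A * V).trace ≤ g * ∑ j ∈ range (Fintype.card ι), μ j := by
  have hM := transpose_mul_self_of_orthogonal hU hV
  rw [trace_conj_eq_sum_fin e hA]
  refine sum_mul_le_mul_sum_range_of_antitoneOn hμ hι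
    (fun j => Fintype.sum_nonneg fun i => mul_self_nonneg _)
    (fun j => row_dotProduct_self_le_of_transpose_mul_self_eq_smul hg hM _) ?_
  rw [e.symm.sum_comp (fun q => (Uᵀ * V) q ⬝ᵥ (Uᵀ * V) q)]
  exact sum_row_dotProduct_self_of_transpose_mul_self_eq_smul hM

theorem mul_sum_range_le_trace_conj [Fintype ι] [DecidableEq ι] (hμ : AntitoneOn μ (Set.Iio N))
    (hU : U * Uᵀ = 1) (hA : A = U * diagonal (fun p => μ (e p)) * Uᵀ) (hg : 0 ≤ g)
    (hV : Vᵀ * V = g • 1) (hι0 : 0 < Fintype.card ι) (hι : Fintype.card ι ≤ N) :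
    g * ∑ i ∈ range (Fintype.card ι), μ (N - Fintype.card ι + i) ≤ (Vᵀ * A * V).trace := by
  have hM := transpose_mul_self_of_orthogonal hU hV
  rw [trace_conj_eq_sum_fin e hA]
  refine mul_sum_range_le_sum_mul_of_antitoneOn hμ hι0 hι
    (fun j => Fintype.sum_nonneg fun i => mul_self_nonneg _)
    (fun j => row_dotProduct_self_le_of_transpose_mul_self_eq_smul hg hM _) ?_
  rw [e.symm.sum_comp (fun q => (Uᵀ * V) q ⬝ᵥ (Uᵀ * V) q)]
  exact sum_row_dotProduct_self_of_transpose_mul_self_eq_smul hM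

theorem trace_conj_add_le_mul_sum_range_of_orthogonal [Fintype ι] [DecidableEq ι] [Fintype κ]
    [DecidableEq κ] (hμ : AntitoneOn μ (Set.Iio N)) (hU : U * Uᵀ = 1)
    (hA : A = U * diagonal (fun p => μ (e p)) * Uᵀ) {Z : Matrix I ι ℝ} {F : Matrix I κ ℝ}
    {c : ℝ} (hg : 0 ≤ g) (hc : 0 < c) (hZ : Zᵀ * Z = g • 1) (hF : Fᵀ * F = c • 1)
    (hZF : Zᵀ * F = 0) (hcard : Fintype.card ι + Fintype.card κ ≤ N) :
    (Zᵀ * A * Z).trace + g / c * (Fᵀ * A * F).trace ≤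
      g * ∑ j ∈ range (Fintype.card ι + Fintype.card κ), μ j := by
  set s := Real.sqrt (g / c)
  have hs : s * s = g / c := Real.mul_self_sqrt (div_nonneg hg hc.le)
  have hFZ : Fᵀ * Z = 0 := by
    rw [← Matrix.transpose_transpose (Fᵀ * Z), Matrix.transpose_mul, Matrix.transpose_transpose,
      hZF, Matrix.transpose_zero]
  have hV : (fromCols Z (s • F))ᵀ * fromCols Z (s • F) = g • 1 := by
    rw [transpose_fromCols, fromRows_mul_fromCols, ← fromBlocks_one, fromBlocks_smul]
    simp only [Matrix.transpose_smul, Matrix.smul_mul, Matrix.mul_smul, hZ, hF, hZF, hFZ,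
      smul_zero, smul_smul]
    rw [← mul_assoc, hs, div_mul_cancel₀ g hc.ne']
  have htr : ((fromCols Z (s • F))ᵀ * A * fromCols Z (s • F)).trace =
      (Zᵀ * A * Z).trace + g / c * (Fᵀ * A * F).trace := by
    rw [transpose_fromCols, Matrix.mul_assoc, mul_fromCols, fromRows_mul_fromCols]
    simp only [Matrix.trace, Matrix.diag, Fintype.sum_sum_type, fromBlocks_apply₁₁,
      fromBlocks_apply₂₂, Matrix.transpose_smul, Matrix.smul_mul, Matrix.mul_smul,
      Matrix.smul_apply, smul_eq_mul, ← Finset.mul_sum, ← mul_assoc, hs, Matrix.mul_assoc]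
  rw [← htr, ← Fintype.card_sum]
  exact trace_conj_le_mul_sum_range e hμ hU hA hg hV (by rwa [Fintype.card_sum])

end KyFan

section Polarization

variable {I ι κ : Type*} [Fintype I]

theorem eq_zero_of_transpose_mul_self_eq_zero {Y : Matrix I ι ℝ} (h : Yᵀ * Y = 0) : Y = 0 :=
  Matrix.conjTranspose_mul_self_eq_zero.1 (by rwa [conjTranspose_eq_transpose_of_trivial])

theorem abs_trace_transpose_mul_mul_le_of_forall_abs_trace_le [Fintype ι] [DecidableEq ι]
    [Nonempty ι] {A : Matrix I I ℝ} (hA : Aᵀ = A) {F : Matrix I κ ℝ} {M : ℝ}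
    (hQ : ∀ (P : Matrix I ι ℝ) (g : ℝ), 0 ≤ g → Pᵀ * P = g • 1 → Pᵀ * F = 0 →
      |(Pᵀ * A * P).trace| ≤ g * M)
    {Y Z : Matrix I ι ℝ} {α β γ : ℝ} (hα : 0 ≤ α) (hβ : 0 ≤ β) (hY : Yᵀ * Y = α ^ 2 • 1)
    (hZ : Zᵀ * Z = β ^ 2 • 1) (hYZ : Yᵀ * Z = γ • 1) (hYF : Yᵀ * F = 0) (hZF : Zᵀ * F = 0) :
    |(Yᵀ * A * Z).trace| ≤ α * β * M := by
  rcases (mul_nonneg hα hβ).eq_or_lt with h0 | hpos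
  · rw [← h0, zero_mul, abs_nonpos_iff]
    rcases mul_eq_zero.1 h0.symm with rfl | rfl
    · rw [eq_zero_of_transpose_mul_self_eq_zero (Y := Y) (by simpa using hY)]
      simp
    · rw [eq_zero_of_transpose_mul_self_eq_zero (Y := Z) (by simpa using hZ)]
      simp
  have hZY : Zᵀ * Y = γ • 1 := by
    rw [← Matrix.transpose_transpose (Zᵀ * Y), Matrix.transpose_mul, Matrix.transpose_transpose,
      hYZ, Matrix.transpose_smul, Matrix.transpose_one]
  have hswap : (Zᵀ * A * Y).trace = (Yᵀ * A * Z).trace := by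
    rw [← Matrix.trace_transpose]
    simp only [Matrix.transpose_mul, Matrix.transpose_transpose, hA, Matrix.mul_assoc]
  set P := β • Y + α • Z
  set Q := β • Y - α • Z
  have hP : Pᵀ * P = (2 * (α * β) ^ 2 + 2 * (α * β) * γ) • 1 := by
    simp only [P, Matrix.transpose_add, Matrix.transpose_smul, Matrix.add_mul, Matrix.mul_add,
      Matrix.smul_mul, Matrix.mul_smul, hY, hZ, hYZ, hZY]
    module
  have hQ' : Qᵀ * Q = (2 * (α * β) ^ 2 - 2 * (α * β) * γ) • 1 := by
    simp only [Q, Matrix.transpose_sub, Matrix.transpose_smul, Matrix.sub_mul, Matrix.mul_sub,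
      Matrix.smul_mul, Matrix.mul_smul, hY, hZ, hYZ, hZY]
    module
  have hPF : Pᵀ * F = 0 := by
    simp [P, Matrix.transpose_add, Matrix.add_mul, hYF, hZF]
  have hQF : Qᵀ * F = 0 := by
    simp [Q, Matrix.transpose_sub, Matrix.sub_mul, hYF, hZF]
  have hpolar : (Pᵀ * A * P).trace - (Qᵀ * A * Q).trace = 4 * (α * β) * (Yᵀ * A * Z).trace := by
    simp only [P, Q, Matrix.transpose_add, Matrix.transpose_sub, Matrix.transpose_smul,
      Matrix.add_mul, Matrix.sub_mul, Matrix.mul_add, Matrix.mul_sub, Matrix.smul_mul,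
      Matrix.mul_smul, Matrix.trace_add, Matrix.trace_sub, Matrix.trace_smul, hswap, smul_eq_mul]
    ring
  have hPbound := hQ P _ (nonneg_of_transpose_mul_self_eq_smul hP) hP hPF
  have hQbound := hQ Q _ (nonneg_of_transpose_mul_self_eq_smul hQ') hQ' hQF
  have h4 : 4 * (α * β) * |(Yᵀ * A * Z).trace| ≤ 4 * (α * β) * (α * β * M) := by
    calc 4 * (α * β) * |(Yᵀ * A * Z).trace|
        = |(Pᵀ * A * P).trace - (Qᵀ * A * Q).trace| := by
          rw [hpolar, abs_mul, abs_of_pos (by positivity : 0 < 4 * (α * β))]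
      _ ≤ |(Pᵀ * A * P).trace| + |(Qᵀ * A * Q).trace| := abs_sub _ _
      _ ≤ _ := by linarith
  exact le_of_mul_le_mul_left h4 (by positivity)

end Polarization

section BlockColumn

variable {V : Type*} (k : ℕ)

def blockCol (y : V → ℝ) : Matrix (V × Fin k) (Fin k) ℝ :=
  Matrix.of fun p i => y p.1 * (1 : Matrix (Fin k) (Fin k) ℝ) p.2 i

variable {k}

@[simp]
theorem blockCol_apply (y : V → ℝ) (u : V) (j i : Fin k) :
    blockCol k y (u, j) i = if j = i then y u else 0 := by
  simp [blockCol, Matrix.one_apply]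

theorem blockCol_sub (y z : V → ℝ) : blockCol k (y - z) = blockCol k y - blockCol k z := by
  ext p i
  simp [blockCol, sub_mul]

theorem blockCol_smul (c : ℝ) (y : V → ℝ) : blockCol k (c • y) = c • blockCol k y := by
  ext p i
  simp [blockCol, mul_assoc]

theorem transpose_blockCol_mul_blockCol [Fintype V] (y z : V → ℝ) :
    (blockCol k y)ᵀ * blockCol k z = (y ⬝ᵥ z) • 1 := by
  ext i j
  rcases eq_or_ne i j with rfl | hij
  · simp [Matrix.mul_apply, Fintype.sum_prod_type, dotProduct]
  · simp [Matrix.mul_apply, Fintype.sum_prod_type, hij, hij.symm]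

end BlockColumn

section CenteredIndicator

variable {n : ℕ}

def centeredIndicator (n : ℕ) (S : Finset (Fin n)) : Fin n → ℝ :=
  Set.indicator (S : Set (Fin n)) 1 - ((S.card : ℝ) / n) • 1

theorem indicator_dotProduct_one (S : Finset (Fin n)) :
    Set.indicator (S : Set (Fin n)) 1 ⬝ᵥ (1 : Fin n → ℝ) = S.card := by
  simp [dotProduct, Set.indicator_apply]

theorem indicator_dotProduct_self (S : Finset (Fin n)) :
    Set.indicator (S : Set (Fin n)) 1 ⬝ᵥ Set.indicator (S : Set (Fin n)) (1 : Fin n → ℝ) =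
      S.card := by
  simp [dotProduct, Set.indicator_apply]

theorem centeredIndicator_dotProduct_one (hn : n ≠ 0) (S : Finset (Fin n)) :
    centeredIndicator n S ⬝ᵥ 1 = 0 := by
  have hn' : (n : ℝ) ≠ 0 := Nat.cast_ne_zero.2 hn
  simp [centeredIndicator, sub_dotProduct, indicator_dotProduct_one, hn']

theorem centeredIndicator_dotProduct_self (hn : n ≠ 0) (S : Finset (Fin n)) :
    centeredIndicator n S ⬝ᵥ centeredIndicator n S = S.card * (1 - S.card / n) := by
  nth_rewrite 2 [centeredIndicator]
  rw [dotProduct_sub, dotProduct_smul, centeredIndicator_dotProduct_one hn, smul_zero, sub_zero,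
    centeredIndicator, sub_dotProduct, smul_dotProduct, indicator_dotProduct_self,
    dotProduct_comm 1, indicator_dotProduct_one, smul_eq_mul]
  ring

end CenteredIndicator

section MatrixWeightedGraph

variable {n k : ℕ} {W : Fin n → Fin n → Matrix (Fin k) (Fin k) ℝ}

theorem transpose_blockCol_one_mul_mwAdj {d : ℝ}
    (hreg : ∀ v, ∑ u, W u v = d • (1 : Matrix (Fin k) (Fin k) ℝ)) :
    (blockCol k (1 : Fin n → ℝ))ᵀ * mwAdj n k W = d • (blockCol k (1 : Fin n → ℝ))ᵀ := by
  ext i ⟨v, j⟩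
  have hvj := congrFun (congrFun (hreg v) i) j
  simp only [Matrix.sum_apply, Matrix.smul_apply, Matrix.one_apply, smul_eq_mul] at hvj
  simp [mwAdj, Matrix.mul_apply, Fintype.sum_prod_type, hvj, eq_comm]

theorem mwAdj_mul_blockCol_one {d : ℝ} (hA : (mwAdj n k W)ᵀ = mwAdj n k W)
    (hreg : ∀ v, ∑ u, W u v = d • (1 : Matrix (Fin k) (Fin k) ℝ)) :
    mwAdj n k W * blockCol k (1 : Fin n → ℝ) = d • blockCol k (1 : Fin n → ℝ) := by
  simpa [Matrix.transpose_mul, hA] using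
    congrArg Matrix.transpose (transpose_blockCol_one_mul_mwAdj hreg)

theorem transpose_blockCol_mul_mwAdj_mul_blockCol (y z : Fin n → ℝ) :
    (blockCol k y)ᵀ * mwAdj n k W * blockCol k z = ∑ u, ∑ v, (y u * z v) • W u v := by
  ext i j
  simp [mwAdj, Matrix.mul_apply, Fintype.sum_prod_type, Matrix.sum_apply, Finset.sum_mul]
  rw [Finset.sum_comm]
  exact Finset.sum_congr rfl fun _ _ => Finset.sum_congr rfl fun _ _ => by ring

theorem transpose_blockCol_indicator_mul_mwAdj_mul (S T : Finset (Fin n)) :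
    (blockCol k (Set.indicator (S : Set (Fin n)) 1))ᵀ * mwAdj n k W *
        blockCol k (Set.indicator (T : Set (Fin n)) 1) = mwEdge n k W S T := by
  rw [transpose_blockCol_mul_mwAdj_mul_blockCol, mwEdge]
  simp [Set.indicator_apply, ite_smul, Finset.sum_ite_mem]

theorem transpose_blockCol_centeredIndicator_mul_mwAdj_mul {d : ℝ} (hn : n ≠ 0)
    (hA : (mwAdj n k W)ᵀ = mwAdj n k W)
    (hreg : ∀ v, ∑ u, W u v = d • (1 : Matrix (Fin k) (Fin k) ℝ)) (S T : Finset (Fin n)) :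
    (blockCol k (centeredIndicator n S))ᵀ * mwAdj n k W * blockCol k (centeredIndicator n T) =
      mwEdge n k W S T - (d * S.card * T.card / n) • 1 := by
  have hn' : (n : ℝ) ≠ 0 := Nat.cast_ne_zero.2 hn
  simp only [centeredIndicator, blockCol_sub, blockCol_smul, Matrix.transpose_sub,
    Matrix.transpose_smul, Matrix.sub_mul, Matrix.mul_sub, Matrix.smul_mul, Matrix.mul_smul,
    transpose_blockCol_one_mul_mwAdj hreg, transpose_blockCol_indicator_mul_mwAdj_mul]
  simp only [Matrix.mul_assoc, mwAdj_mul_blockCol_one hA hreg, Matrix.mul_smul,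
    transpose_blockCol_mul_blockCol, indicator_dotProduct_one,
    dotProduct_comm 1 (Set.indicator _ 1)]
  rw [one_dotProduct_one, Fintype.card_fin]
  match_scalars
  · ring
  · field_simp
    ring

theorem abs_trace_transpose_mul_mwAdj_mul_le {d : ℝ} (hn : 2 ≤ n) (hk : 0 < k)
    (hreg : ∀ v, ∑ u, W u v = d • (1 : Matrix (Fin k) (Fin k) ℝ))
    {μ : ℕ → ℝ} (hμ : AntitoneOn μ (Set.Iio (n * k))) (htop : ∀ i < k, μ i = d)
    {U : Matrix (Fin n × Fin k) (Fin n × Fin k) ℝ} (hU : U * Uᵀ = 1)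
    (hAW : mwAdj n k W = U * diagonal (fun p => μ (finProdFinEquiv p)) * Uᵀ)
    (hA : (mwAdj n k W)ᵀ = mwAdj n k W)
    {P : Matrix (Fin n × Fin k) (Fin k) ℝ} {g : ℝ} (hg : 0 ≤ g) (hP : Pᵀ * P = g • 1)
    (hPF : Pᵀ * blockCol k (1 : Fin n → ℝ) = 0) :
    |(Pᵀ * mwAdj n k W * P).trace| ≤
      g * max (∑ i ∈ range k, μ (k + i)) (∑ i ∈ range k, |μ ((n - 1) * k + i)|) := by
  have hn0 : (0 : ℝ) < n := by positivity
  have hFF : (blockCol k (1 : Fin n → ℝ))ᵀ * blockCol k (1 : Fin n → ℝ) =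
      (n : ℝ) • (1 : Matrix (Fin k) (Fin k) ℝ) := by
    rw [transpose_blockCol_mul_blockCol, one_dotProduct_one, Fintype.card_fin]
  have hFAF : ((blockCol k (1 : Fin n → ℝ))ᵀ * mwAdj n k W * blockCol k (1 : Fin n → ℝ)).trace =
      d * n * k := by
    rw [Matrix.mul_assoc, mwAdj_mul_blockCol_one hA hreg, Matrix.mul_smul, hFF]
    simp [mul_assoc]
  have hupper := trace_conj_add_le_mul_sum_range_of_orthogonal finProdFinEquiv hμ hU hAW hg hn0
    hP hFF hPF (by simp only [Fintype.card_fin]; nlinarith)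
  rw [hFAF, Fintype.card_fin, Finset.sum_range_add,
    Finset.sum_congr rfl fun i hi => htop i (Finset.mem_range.1 hi), Finset.sum_const,
    Finset.card_range, nsmul_eq_mul] at hupper
  have hlower := mul_sum_range_le_trace_conj finProdFinEquiv hμ hU hAW hg hP
    (by simpa using hk) (by simp only [Fintype.card_fin]; nlinarith)
  rw [Fintype.card_fin, show n * k - k = (n - 1) * k by rw [Nat.sub_mul, one_mul]] at hlower
  have habs : -∑ i ∈ range k, |μ ((n - 1) * k + i)| ≤ ∑ i ∈ range k, μ ((n - 1) * k + i) := by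
    rw [← Finset.sum_neg_distrib]
    exact Finset.sum_le_sum fun i _ => neg_abs_le _
  rw [abs_le]
  constructor
  · nlinarith [mul_le_mul_of_nonneg_left (le_max_right (∑ i ∈ range k, μ (k + i))
      (∑ i ∈ range k, |μ ((n - 1) * k + i)|)) hg]
  · field_simp at hupper
    nlinarith [mul_le_mul_of_nonneg_left (le_max_left (∑ i ∈ range k, μ (k + i))
      (∑ i ∈ range k, |μ ((n - 1) * k + i)|)) hg]

end MatrixWeightedGraph

theorem matrix_weighted_expander_mixing_trace_general
    (n k : ℕ) (hn : 2 ≤ n) (d : ℝ)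
    (W : Fin n → Fin n → Matrix (Fin k) (Fin k) ℝ)
    (hreg : ∀ v : Fin n, ∑ u, W u v = d • (1 : Matrix (Fin k) (Fin k) ℝ))
    (mu : ℕ → ℝ) (hmu : AntitoneOn mu (Set.Iio (n * k)))
    (htop : ∀ i < k, mu i = d)
    (U : Matrix (Fin n × Fin k) (Fin n × Fin k) ℝ) (hU : U * Uᵀ = 1)
    (hAW : mwAdj n k W =
      U * Matrix.diagonal (fun p => mu (finProdFinEquiv p)) * Uᵀ)
    (S T : Finset (Fin n)) :
    |(mwEdge n k W S T).trace - (k : ℝ) * d * S.card * T.card / n| ≤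
      max (∑ i ∈ Finset.range k, mu (k + i))
          (∑ i ∈ Finset.range k, |mu ((n - 1) * k + i)|) *
        Real.sqrt ((S.card : ℝ) * T.card * (1 - S.card / n) * (1 - T.card / n)) := by
  rcases Nat.eq_zero_or_pos k with rfl | hk
  · simp [Matrix.trace]
  have : Nonempty (Fin k) := ⟨⟨0, hk⟩⟩
  have hn0 : n ≠ 0 := by omega
  have hA : (mwAdj n k W)ᵀ = mwAdj n k W := by
    simp [hAW, Matrix.transpose_mul, Matrix.mul_assoc]
  have hvar (R : Finset (Fin n)) : 0 ≤ (R.card : ℝ) * (1 - R.card / n) := by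
    simpa [centeredIndicator_dotProduct_self hn0] using
      dotProduct_self_star_nonneg (centeredIndicator n R)
  have hnorm (R : Finset (Fin n)) : (blockCol k (centeredIndicator n R))ᵀ *
      blockCol k (centeredIndicator n R) = √(R.card * (1 - R.card / n)) ^ 2 • 1 := by
    rw [transpose_blockCol_mul_blockCol, centeredIndicator_dotProduct_self hn0,
      Real.sq_sqrt (hvar R)]
  have horth (R : Finset (Fin n)) :
      (blockCol k (centeredIndicator n R))ᵀ * blockCol k (1 : Fin n → ℝ) = 0 := by
    rw [transpose_blockCol_mul_blockCol, centeredIndicator_dotProduct_one hn0, zero_smul]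
  have key := abs_trace_transpose_mul_mul_le_of_forall_abs_trace_le hA
    (fun P g hg hP hPF =>
      abs_trace_transpose_mul_mwAdj_mul_le hn hk hreg hmu htop hU hAW hA hg hP hPF)
    (Real.sqrt_nonneg _) (Real.sqrt_nonneg _) (hnorm S) (hnorm T)
    (transpose_blockCol_mul_blockCol _ _) (horth S) (horth T)
  rw [transpose_blockCol_centeredIndicator_mul_mwAdj_mul hn0 hA hreg, Matrix.trace_sub,
    Matrix.trace_smul, Matrix.trace_one, Fintype.card_fin, smul_eq_mul] at key
  rw [show (S.card : ℝ) * T.card * (1 - S.card / n) * (1 - T.card / n) =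
      S.card * (1 - S.card / n) * (T.card * (1 - T.card / n)) by ring,
    Real.sqrt_mul' _ (hvar T), mul_comm (max _ _)]
  convert key using 3
  ring

/-- Expander mixing lemma for `d`-regular matrix-weighted graphs, trace form:
`|tr E(S,T) - k d |S||T|/n| ≤ |μ| √(|S||T|(1-|S|/n)(1-|T|/n))`, where
`|μ| = max(∑_{i=1}^k μ_{k+i}, ∑_{i=1}^k |μ_{(n-1)k+i}|)` and `mu` enumerates the
adjacency eigenvalues in decreasing order (0-indexed), with `μ_1 = ⋯ = μ_k = d`,
witnessed by an orthogonal spectral decomposition. -/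
theorem matrix_weighted_expander_mixing_trace
    (n k : ℕ) (hn : 2 ≤ n) (d : ℝ) (G : SimpleGraph (Fin n))
    (W : Fin n → Fin n → Matrix (Fin k) (Fin k) ℝ)
    (hpsd : ∀ u v, (W u v).PosSemidef)
    (hsym : ∀ u v, W u v = W v u)
    (h0 : ∀ u v, ¬ G.Adj u v → W u v = 0)
    (hreg : ∀ v : Fin n, ∑ u, W u v = d • (1 : Matrix (Fin k) (Fin k) ℝ))
    (mu : ℕ → ℝ) (hmu : AntitoneOn mu (Set.Iio (n * k)))
    (htop : ∀ i < k, mu i = d)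
    (U : Matrix (Fin n × Fin k) (Fin n × Fin k) ℝ) (hU : U * Uᵀ = 1)
    (hAW : mwAdj n k W =
      U * Matrix.diagonal (fun p => mu (finProdFinEquiv p)) * Uᵀ)
    (S T : Finset (Fin n)) :
    |(mwEdge n k W S T).trace - (k : ℝ) * d * S.card * T.card / n| ≤
      max (∑ i ∈ Finset.range k, mu (k + i))
          (∑ i ∈ Finset.range k, |mu ((n - 1) * k + i)|) *
        Real.sqrt ((S.card : ℝ) * T.card * (1 - S.card / n) * (1 - T.card / n)) :=
  matrix_weighted_expander_mixing_trace_general n k hn d W hreg mu hmu htop U hU hAW S T
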